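/- Let F be a regular thin family of finite subsets of ℕ, X a set and φ : F → X hereditarily nonconstant, i.e. for every L ∈ [ℕ]^∞ the restriction of φ to F↾L is nonconstant. Then for every N ∈ [ℕ]^∞ there exists L ∈ [N]^∞ such that φ(s₁) ≠ φ(s₂) for every plegma pair (s₁, s₂) in F↾L. -/
import Mathlib


open Set Filter

namespace HOSM

/-- `t` is an initial segment of the finite set `s` (w.r.t. the increasing enumerations). -/
def InitSeg (t s : Finset ℕ) : Prop :=
  t ⊆ s ∧ ∀ a ∈ s, ∀ b ∈ t, a ≤ b → a ∈ t

/-- `t` is a proper initial segment of `s`. -/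
def ProperInitSeg (t s : Finset ℕ) : Prop := InitSeg t s ∧ t ≠ s

/-- The initial-segment closure `F̂` of a family `F`. -/
def hat (F : Set (Finset ℕ)) : Set (Finset ℕ) := {t | ∃ s ∈ F, InitSeg t s}

/-- The restriction `F↾L = {s ∈ F : s ⊆ L}`. -/
def restrict (F : Set (Finset ℕ)) (L : Set ℕ) : Set (Finset ℕ) :=
  {s | s ∈ F ∧ (s : Set ℕ) ⊆ L}

/-- `F` is hereditary: it contains all subsets of its members. -/
def Hereditary (F : Set (Finset ℕ)) : Prop := ∀ s ∈ F, ∀ t ⊆ s, t ∈ F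

/-- `elt s k` is the `k`-th smallest element of `s` (0-indexed; junk value `0` out of range). -/
def elt (s : Finset ℕ) (k : ℕ) : ℕ := (s.sort (· ≤ ·)).getD k 0

/-- `F` is spreading. -/
def Spreading (F : Set (Finset ℕ)) : Prop :=
  ∀ s ∈ F, ∀ t : Finset ℕ, t.card = s.card → (∀ k < s.card, elt s k ≤ elt t k) → t ∈ F

/-- The characteristic function of a finite set, as an element of `{0,1}^ℕ`. -/
def chi (s : Finset ℕ) : ℕ → Bool := fun n => decide (n ∈ s)

/-- `F` is compact: the set of characteristic functions of its members is closed in `{0,1}^ℕ`. -/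
def CompactFam (F : Set (Finset ℕ)) : Prop := IsClosed (chi '' F)

/-- `F` is regular: compact, hereditary and spreading. -/
def RegularFam (F : Set (Finset ℕ)) : Prop := CompactFam F ∧ Hereditary F ∧ Spreading F

/-- `F` is thin: no member is a proper initial segment of another member. -/
def Thin (F : Set (Finset ℕ)) : Prop := ∀ s ∈ F, ∀ t ∈ F, ¬ ProperInitSeg t s

/-- `F` is regular thin: thin, and its closure `F̂` is regular. -/
def RegularThin (F : Set (Finset ℕ)) : Prop := Thin F ∧ RegularFam (hat F)

/-- The relation on finite sets: `extRel F t s` iff `t ∈ F̂` and `s` is a proper initial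
segment of `t`.  Rank with respect to it computes the order `o_{F̂}`. -/
def extRel (F : Set (Finset ℕ)) (t s : Finset ℕ) : Prop := t ∈ hat F ∧ ProperInitSeg s t

open scoped Classical in
/-- The order `o(F)` of a family: the ordinal rank of the tree `F̂` at `∅`
(junk value `0` if `F̂` is ill-founded). -/
noncomputable def famOrder (F : Set (Finset ℕ)) : Ordinal :=
  if h : Acc (extRel F) (∅ : Finset ℕ) then h.rank else 0

/-- `nth L k` is the `k`-th smallest element of the set `L` (0-indexed). -/
noncomputable def nth (L : Set ℕ) (k : ℕ) : ℕ := Nat.nth (· ∈ L) k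

/-- `L(s) = {L(k) : k ∈ s}` for a finite set `s`. -/
noncomputable def mapSet (L : Set ℕ) (s : Finset ℕ) : Finset ℕ := s.image (nth L)

/-- An `l`-tuple of nonempty finite subsets of `ℕ` is a plegma family. -/
def IsPlegma {l : ℕ} (s : Fin l → Finset ℕ) : Prop :=
  (∀ i, (s i).Nonempty) ∧
  (∀ i j : Fin l, i < j → ∀ k, k < (s i).card → k < (s j).card →
      elt (s i) k < elt (s j) k) ∧
  (∀ i j : Fin l, ∀ k, k < (s i).card → k + 1 < (s j).card →
      elt (s i) k < elt (s j) (k + 1))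

/-- A plegma pair. -/
def IsPlegmaPair (s t : Finset ℕ) : Prop := IsPlegma ![s, t]

/-- `Plm l G`: the set of plegma `l`-tuples with members in `G`. -/
def Plm (l : ℕ) (G : Set (Finset ℕ)) : Set (Fin l → Finset ℕ) :=
  {s | IsPlegma s ∧ ∀ i, s i ∈ G}

/-- `s` is an initial segment of the infinite set `N`. -/
def InitSegOfInf (s : Finset ℕ) (N : Set ℕ) : Prop :=
  (s : Set ℕ) ⊆ N ∧ ∀ a ∈ N, ∀ b ∈ s, a ≤ b → a ∈ s

/-- `F` is very large in `M`: every infinite subset of `M` has an initial segment in `F`. -/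
def VeryLarge (F : Set (Finset ℕ)) (M : Set ℕ) : Prop :=
  ∀ N : Set ℕ, N ⊆ M → N.Infinite → ∃ s ∈ F, InitSegOfInf s N

/-- `F↾↾L`. -/
def restrict2 (F : Set (Finset ℕ)) (L : Set ℕ) : Set (Finset ℕ) :=
  {s | s ∈ restrict F L ∧ ∀ j, j + 1 < s.card → ∃ l ∈ L, elt s j < l ∧ l < elt s (j + 1)}

/-- `φ` is plegma preserving on `D`. -/
def PlegmaPreserving (D : Set (Finset ℕ)) (φ : Finset ℕ → Finset ℕ) : Prop :=
  ∀ s₁ ∈ D, ∀ s₂ ∈ D, IsPlegmaPair s₁ s₂ → IsPlegmaPair (φ s₁) (φ s₂)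

end HOSM

namespace HOSM

-- ### basic elt lemmas

lemma elt_eq_orderEmbOfFin (s : Finset ℕ) {k : ℕ} (hk : k < s.card) :
    elt s k = s.orderEmbOfFin rfl ⟨k, hk⟩ := by
  rw [Finset.orderEmbOfFin_apply]
  unfold elt
  rw [List.getD_eq_getElem _ _ (by rw [Finset.length_sort]; exact hk)]
  rfl

lemma elt_mem {s : Finset ℕ} {k : ℕ} (hk : k < s.card) : elt s k ∈ s := by
  rw [elt_eq_orderEmbOfFin s hk]; exact Finset.orderEmbOfFin_mem _ _ _

lemma elt_strictMono {s : Finset ℕ} {j k : ℕ} (hjk : j < k) (hk : k < s.card) :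
    elt s j < elt s k := by
  rw [elt_eq_orderEmbOfFin s hk, elt_eq_orderEmbOfFin s (lt_trans hjk hk)]
  exact (s.orderEmbOfFin rfl).strictMono (by exact hjk)

lemma elt_mono {s : Finset ℕ} {j k : ℕ} (hjk : j ≤ k) (hk : k < s.card) :
    elt s j ≤ elt s k := by
  rcases eq_or_lt_of_le hjk with rfl | h
  · exact le_refl _
  · exact le_of_lt (elt_strictMono h hk)

lemma exists_elt {s : Finset ℕ} {a : ℕ} (ha : a ∈ s) : ∃ k, k < s.card ∧ elt s k = a := by
  have : a ∈ Set.range (s.orderEmbOfFin rfl) := by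
    rw [Finset.range_orderEmbOfFin]; exact_mod_cast ha
  obtain ⟨⟨k, hk⟩, h⟩ := this
  exact ⟨k, hk, by rw [elt_eq_orderEmbOfFin s hk]; exact h⟩

/-- sorted enumeration lemma : a strictly monotone map into `s` defined on `Iio s.card`
computes `elt`. -/
lemma elt_eq_of_strictMono {s : Finset ℕ} {g : ℕ → ℕ} {n : ℕ} (hn : s.card = n)
    (hmem : ∀ j, j < n → g j ∈ s) (hmono : ∀ j k, j < k → k < n → g j < g k)
    {j : ℕ} (hj : j < n) : elt s j = g j := by
  have hu : (fun i : Fin n => g i.1) = s.orderEmbOfFin hn := by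
    apply Finset.orderEmbOfFin_unique hn (fun x => hmem x.1 x.2)
    intro a b hab
    exact hmono a.1 b.1 hab b.2
  have : elt s j = s.orderEmbOfFin hn ⟨j, hj⟩ := by
    subst hn; exact elt_eq_orderEmbOfFin s hj
  rw [this, ← hu]

-- ### initial segment lemmas

lemma initSeg_of_elt_agree {u w : Finset ℕ} (hcard : u.card ≤ w.card)
    (h : ∀ k, k < u.card → elt u k = elt w k) : InitSeg u w := by
  constructor
  · intro b hb
    obtain ⟨k, hk, rfl⟩ := exists_elt hb
    rw [h k hk]
    exact elt_mem (lt_of_lt_of_le hk hcard)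
  · intro a ha b hb hab
    obtain ⟨i, hi, rfl⟩ := exists_elt ha
    obtain ⟨j, hj, rfl⟩ := exists_elt hb
    rw [h j hj] at hab
    have hij : i ≤ j := by
      by_contra hc
      push_neg at hc
      exact absurd (elt_strictMono hc hi) (not_lt.2 hab)
    have hiu : i < u.card := lt_of_le_of_lt hij hj
    rw [← h i hiu]
    exact elt_mem hiu

lemma elt_agree_of_initSeg {u w : Finset ℕ} (h : InitSeg u w) :
    u.card ≤ w.card ∧ ∀ k, k < u.card → elt u k = elt w k := by
  have hcard : u.card ≤ w.card := Finset.card_le_card h.1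
  refine ⟨hcard, ?_⟩
  -- first : for k < u.card, elt w k ∈ u
  have hmem : ∀ k, k < u.card → elt w k ∈ u := by
    intro k hk
    -- u has u.card elements in w, so some element of u has index ≥ k in w
    have : ∃ b ∈ u, elt w k ≤ b := by
      by_contra hc
      push_neg at hc
      -- all elements of u are < elt w k, so u ⊆ image of elt w over Iio k
      have hsub : u ⊆ (Finset.range k).image (elt w) := by
        intro b hb
        obtain ⟨j, hj, rfl⟩ := exists_elt (h.1 hb)
        have : j < k := by
          by_contra hjk
          push_neg at hjk
          exact absurd (elt_mono hjk hj) (not_le.2 (hc _ hb))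
        exact Finset.mem_image.2 ⟨j, Finset.mem_range.2 this, rfl⟩
      have := Finset.card_le_card hsub
      have h2 := Finset.card_image_le (s := Finset.range k) (f := elt w)
      rw [Finset.card_range] at h2
      omega
    obtain ⟨b, hb, hble⟩ := this
    exact h.2 _ (elt_mem (lt_of_lt_of_le hk hcard)) b hb hble
  intro k hk
  exact elt_eq_of_strictMono rfl (fun j hj => hmem j hj)
    (fun i j hij hj => elt_strictMono hij (lt_of_lt_of_le hj hcard)) hk

lemma thin_eq {F : Set (Finset ℕ)} (hF : Thin F) {u w : Finset ℕ} (hu : u ∈ F) (hw : w ∈ F)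
    (h : InitSeg u w) : u = w := by
  by_contra hne
  exact hF w hw u hu ⟨h, hne⟩

/-- two finite initial segments of the same set are comparable -/
lemma initSeg_comparable {u w : Finset ℕ} {P : Set ℕ} (hu : InitSegOfInf u P)
    (hw : InitSegOfInf w P) : InitSeg u w ∨ InitSeg w u := by
  by_cases hc : ∀ b ∈ u, ∃ c ∈ w, b ≤ c
  · left
    constructor
    · intro b hb
      obtain ⟨c, hcw, hbc⟩ := hc b hb
      exact hw.2 b (hu.1 hb) c hcw hbc
    · intro a ha b hb hab
      exact hu.2 a (hw.1 ha) b hb hab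
  · right
    push_neg at hc
    obtain ⟨b₀, hb₀, hlt⟩ := hc
    constructor
    · intro c hcw
      exact hu.2 c (hw.1 hcw) b₀ hb₀ (le_of_lt (hlt c hcw))
    · intro a ha b hb hab
      exact hw.2 a (hu.1 ha) b hb hab

lemma initSegOfInf_unique {F : Set (Finset ℕ)} (hF : Thin F) {u w : Finset ℕ} {P : Set ℕ}
    (hu : u ∈ F) (hw : w ∈ F) (h1 : InitSegOfInf u P) (h2 : InitSegOfInf w P) : u = w := by
  rcases initSeg_comparable h1 h2 with h | h
  · exact thin_eq hF hu hw h
  · exact (thin_eq hF hw hu h).symm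

/-- a finite set is an initial segment of itself together with any tail entirely above it -/
lemma initSegOfInf_union_tail {u : Finset ℕ} {T : Set ℕ} (hT : ∀ x ∈ T, ∀ b ∈ u, b < x) :
    InitSegOfInf u (↑u ∪ T) := by
  constructor
  · exact subset_union_left
  · intro a ha b hb hab
    rcases ha with ha | ha
    · exact ha
    · exact absurd hab (not_le.2 (hT a ha b hb))

/-- enumeration of an initial segment of the range of a strictly monotone function -/
lemma elt_initSegOfInf_range {e : ℕ → ℕ} (he : StrictMono e) {u : Finset ℕ}
    (hu : InitSegOfInf u (Set.range e)) {k : ℕ} (hk : k < u.card) : elt u k = e k := by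
  have hmem : ∀ j, j < u.card → e j ∈ u := by
    intro j hj
    have : ∃ b ∈ u, e j ≤ b := by
      by_contra hc
      push_neg at hc
      have hsub : u ⊆ (Finset.range j).image e := by
        intro b hb
        obtain ⟨i, rfl⟩ := hu.1 hb
        have : i < j := by
          by_contra hij
          push_neg at hij
          exact absurd (he.monotone hij) (not_le.2 (hc _ hb))
        exact Finset.mem_image.2 ⟨i, Finset.mem_range.2 this, rfl⟩
      have := Finset.card_le_card hsub
      have h2 := Finset.card_image_le (s := Finset.range j) (f := e)
      rw [Finset.card_range] at h2
      omega
    obtain ⟨b, hb, hble⟩ := this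
    exact hu.2 (e j) ⟨j, rfl⟩ b hb hble
  exact elt_eq_of_strictMono rfl hmem (fun i j hij _ => he hij) hk

-- ### Galvin's lemma : combinatorial forcing

def Accepts (F : Set (Finset ℕ)) (a : Finset ℕ) (M : Set ℕ) : Prop :=
  ∀ N : Set ℕ, N ⊆ M → N.Infinite → ∃ t : Finset ℕ, InitSegOfInf t N ∧ a ∪ t ∈ F

def Rejects (F : Set (Finset ℕ)) (a : Finset ℕ) (M : Set ℕ) : Prop :=
  ∀ L : Set ℕ, L ⊆ M → L.Infinite → ¬ Accepts F a L

lemma Accepts.mono {F : Set (Finset ℕ)} {a : Finset ℕ} {M M' : Set ℕ} (h : Accepts F a M)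
    (hsub : M' ⊆ M) : Accepts F a M' := fun N hN hNi => h N (hN.trans hsub) hNi

lemma Rejects.mono {F : Set (Finset ℕ)} {a : Finset ℕ} {M M' : Set ℕ} (h : Rejects F a M)
    (hsub : M' ⊆ M) : Rejects F a M' := fun L hL hLi => h L (hL.trans hsub) hLi

lemma Rejects.of_diff_finite {F : Set (Finset ℕ)} {a : Finset ℕ} {M M' : Set ℕ}
    (h : Rejects F a M) (hfin : (M' \ M).Finite) : Rejects F a M' := by
  intro L hL hLi hacc
  have h1 : L \ M ⊆ M' \ M := fun x hx => ⟨hL hx.1, hx.2⟩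
  have h2 : (L ∩ M).Infinite := by
    have h3 := hLi.diff (hfin.subset h1)
    apply h3.mono
    rintro x ⟨hxL, hxn⟩
    by_cases hxM : x ∈ M
    · exact ⟨hxL, hxM⟩
    · exact absurd ⟨hxL, hxM⟩ hxn
  exact h (L ∩ M) inter_subset_right h2 (hacc.mono inter_subset_left)

lemma exists_decides (F : Set (Finset ℕ)) (a : Finset ℕ) {M : Set ℕ} (hM : M.Infinite) :
    ∃ L, L ⊆ M ∧ L.Infinite ∧ (Accepts F a L ∨ Rejects F a L) := by
  by_cases h : ∃ L, L ⊆ M ∧ L.Infinite ∧ Accepts F a L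
  · obtain ⟨L, h1, h2, h3⟩ := h; exact ⟨L, h1, h2, Or.inl h3⟩
  · push_neg at h
    exact ⟨M, subset_rfl, hM, Or.inr (fun L hL hLi hacc => h L hL hLi hacc)⟩

lemma decides_mono {F : Set (Finset ℕ)} {a : Finset ℕ} {M M' : Set ℕ}
    (h : Accepts F a M ∨ Rejects F a M) (hsub : M' ⊆ M) :
    Accepts F a M' ∨ Rejects F a M' := by
  rcases h with h | h
  · exact Or.inl (h.mono hsub)
  · exact Or.inr (h.mono hsub)

lemma exists_decides_finset (F : Set (Finset ℕ)) (A : Finset (Finset ℕ)) {M : Set ℕ}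
    (hM : M.Infinite) :
    ∃ L, L ⊆ M ∧ L.Infinite ∧ ∀ a ∈ A, (Accepts F a L ∨ Rejects F a L) := by
  induction A using Finset.induction_on with
  | empty => exact ⟨M, subset_rfl, hM, by simp⟩
  | @insert a A ha ih =>
      obtain ⟨L₀, h1, h2, h3⟩ := ih
      obtain ⟨L, g1, g2, g3⟩ := exists_decides F a h2
      refine ⟨L, g1.trans h1, g2, ?_⟩
      intro b hb
      rcases Finset.mem_insert.1 hb with rfl | hb
      · exact g3
      · exact decides_mono (h3 b hb) g1

lemma seq_of_step {α : Type*} {P : α → Prop} {R : α → α → Prop} (init : α) (hinit : P init)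
    (hstep : ∀ σ, P σ → ∃ τ, P τ ∧ R σ τ) :
    ∃ g : ℕ → α, g 0 = init ∧ (∀ k, P (g k)) ∧ ∀ k, R (g k) (g (k + 1)) := by
  choose f hf1 hf2 using hstep
  let F' : {σ // P σ} → {σ // P σ} := fun σ => ⟨f σ.1 σ.2, hf1 σ.1 σ.2⟩
  refine ⟨fun k => (F'^[k] ⟨init, hinit⟩).1, rfl, fun k => (F'^[k] ⟨init, hinit⟩).2, fun k => ?_⟩
  have h : F'^[k+1] ⟨init, hinit⟩ = F' (F'^[k] ⟨init, hinit⟩) :=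
    Function.iterate_succ_apply' F' k ⟨init, hinit⟩
  show R (F'^[k] ⟨init, hinit⟩).1 (F'^[k+1] ⟨init, hinit⟩).1
  rw [h]
  exact hf2 _ _

theorem galvin_core (F : Set (Finset ℕ)) {M : Set ℕ} (hM : M.Infinite) :
    ∃ n : ℕ → ℕ, StrictMono n ∧ (∀ k, n k ∈ M) ∧
      (∀ k (a : Finset ℕ), a ⊆ (Finset.range k).image n →
        (Accepts F a {x | ∃ j, k ≤ j ∧ n j = x} ∨ Rejects F a {x | ∃ j, k ≤ j ∧ n j = x})) ∧
      (Accepts F ∅ (Set.range n) ∨ Rejects F ∅ (Set.range n)) := by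
  obtain ⟨M₀, hM₀M, hM₀i, hdec₀⟩ := exists_decides_finset F ({∅} : Finset (Finset ℕ)) hM
  set Inv : ℕ × Finset ℕ × Set ℕ → Prop := fun σ =>
    σ.2.2.Infinite ∧ σ.2.2 ⊆ M₀ ∧ (∀ b ∈ σ.2.1, ∀ y ∈ σ.2.2, b < y) ∧
      (∀ a ∈ σ.2.1.powerset, Accepts F a σ.2.2 ∨ Rejects F a σ.2.2) with hInvDef
  set Rel : (ℕ × Finset ℕ × Set ℕ) → (ℕ × Finset ℕ × Set ℕ) → Prop := fun σ τ =>
    τ.2.2 ⊆ σ.2.2 ∧ τ.2.1 = insert τ.1 σ.2.1 ∧ τ.1 ∈ σ.2.2 with hRelDef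
  have hinit : Inv (0, ∅, M₀) := by
    refine ⟨hM₀i, subset_rfl, by simp, ?_⟩
    intro a ha
    rw [Finset.mem_powerset, Finset.subset_empty] at ha
    subst ha
    exact hdec₀ ∅ (Finset.mem_singleton_self _)
  have hstep : ∀ σ, Inv σ → ∃ τ, Inv τ ∧ Rel σ τ := by
    rintro ⟨l, c, cur⟩ ⟨h1, h2, h3, h4⟩
    obtain ⟨x, hx⟩ := h1.nonempty
    have hcur1 : ({y | y ∈ cur ∧ x < y}).Infinite := by
      apply (h1.diff (Set.finite_Iic x)).mono
      rintro y ⟨hy1, hy2⟩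
      exact ⟨hy1, by simpa using hy2⟩
    obtain ⟨cur2, hsub2, hinf2, hdec2⟩ := exists_decides_finset F (insert x c).powerset hcur1
    have hcur2cur : cur2 ⊆ cur := hsub2.trans (fun y hy => hy.1)
    refine ⟨(x, insert x c, cur2), ⟨hinf2, hcur2cur.trans h2, ?_, ?_⟩, hcur2cur, rfl, hx⟩
    · intro b hb y hy
      rcases Finset.mem_insert.1 hb with rfl | hb
      · exact (hsub2 hy).2
      · exact h3 b hb y (hcur2cur hy)
    · intro a ha
      exact hdec2 a ha
  obtain ⟨g, hg0, hgP, hgR⟩ := seq_of_step (0, ∅, M₀) hinit hstep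
  set n : ℕ → ℕ := fun k => (g (k + 1)).1 with hn
  have curmono : ∀ k j, k ≤ j → (g j).2.2 ⊆ (g k).2.2 := by
    intro k j hkj
    induction j with
    | zero => rw [Nat.le_zero.1 hkj]
    | succ j ih =>
        rcases Nat.lt_or_ge k (j+1) with h | h
        · exact (hgR j).1.trans (ih (Nat.lt_succ_iff.1 h))
        · rw [Nat.le_antisymm hkj h]
  have hnk : ∀ k, n k ∈ (g k).2.2 := fun k => (hgR k).2.2
  have chosen_eq : ∀ k, (g k).2.1 = (Finset.range k).image n := by
    intro k
    induction k with
    | zero => rw [hg0]; simp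
    | succ k ih =>
        rw [(hgR k).2.1, ih, Finset.range_add_one, Finset.image_insert]
  have hmono : StrictMono n := by
    apply strictMono_nat_of_lt_succ
    intro k
    have h4 := (hgP (k+1)).2.2.1
    apply h4 (n k) _ (n (k+1)) (hnk (k+1))
    rw [(hgR k).2.1]
    exact Finset.mem_insert_self _ _
  have hsubM₀ : ∀ k, n k ∈ M₀ := by
    intro k
    have := curmono 0 k (Nat.zero_le k) (hnk k)
    rwa [hg0] at this
  refine ⟨n, hmono, fun k => hM₀M (hsubM₀ k), ?_, ?_⟩
  · intro k a ha
    have hdeck := (hgP k).2.2.2 a (by rwa [Finset.mem_powerset, chosen_eq k])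
    apply decides_mono hdeck
    rintro x ⟨j, hkj, rfl⟩
    exact curmono k j hkj (hnk j)
  · have hdeck := (hgP 0).2.2.2 ∅ (by simp)
    apply decides_mono hdeck
    rintro x ⟨k, rfl⟩
    exact curmono 0 k (Nat.zero_le k) (hnk k)

theorem galvin (F : Set (Finset ℕ)) {M : Set ℕ} (hM : M.Infinite) :
    ∃ L, L ⊆ M ∧ L.Infinite ∧
      ((∀ N ⊆ L, N.Infinite → ∃ t, InitSegOfInf t N ∧ t ∈ F) ∨
        (∀ s ∈ F, ¬ (↑s : Set ℕ) ⊆ L)) := by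
  obtain ⟨n, hmono, hnM, hdec, hzero⟩ := galvin_core F hM
  rcases hzero with hacc | hrej
  · refine ⟨Set.range n, ?_, Set.infinite_range_of_injective hmono.injective, Or.inl ?_⟩
    · rintro x ⟨k, rfl⟩; exact hnM k
    · intro N hN hNi
      obtain ⟨t, ht1, ht2⟩ := hacc N hN hNi
      rw [Finset.empty_union] at ht2
      exact ⟨t, ht1, ht2⟩
  · -- Phase 2 : build a set all of whose finite subsets are rejected
    set T : Finset ℕ → Set ℕ := fun a => {x | x ∈ Set.range n ∧ ∀ b ∈ a, b < x} with hT
    have hTsub : ∀ a, T a ⊆ Set.range n := fun a x hx => hx.1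
    have hTinf : ∀ a : Finset ℕ, (T a).Infinite := by
      intro a
      apply ((Set.infinite_range_of_injective hmono.injective).diff
        (Set.finite_Iic (a.sup id))).mono
      rintro x ⟨hx1, hx2⟩
      simp only [Set.mem_Iic, not_le] at hx2
      exact ⟨hx1, fun b hb => lt_of_le_of_lt (Finset.le_sup (f := id) hb) hx2⟩
    set Bad : Finset ℕ → Set ℕ := fun a =>
      {x | ∃ k', x = n k' ∧ x ∈ T a ∧
        Accepts F (insert x a) {y | ∃ j, k' + 1 ≤ j ∧ n j = y}} with hBad
    have hbadfin : ∀ a : Finset ℕ, Rejects F a (T a) → (Bad a).Finite := by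
      intro a hreja
      by_contra hinf
      rw [← Set.not_infinite, not_not] at hinf
      apply hreja (Bad a) (fun x hx => by obtain ⟨k', _, h2, _⟩ := hx; exact h2) hinf
      intro N hN hNi
      set x := sInf N with hxdef
      have hxN : x ∈ N := Nat.sInf_mem hNi.nonempty
      obtain ⟨k', hxn, hxTa, haccx⟩ := hN hxN
      set N' : Set ℕ := {y | y ∈ N ∧ x < y} with hN'def
      have hN'inf : N'.Infinite := by
        apply (hNi.diff (Set.finite_singleton x)).mono
        rintro y ⟨hy1, hy2⟩
        simp only [Set.mem_singleton_iff] at hy2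
        exact ⟨hy1, lt_of_le_of_ne (Nat.sInf_le hy1) (Ne.symm hy2)⟩
      have hN'sub : N' ⊆ {y | ∃ j, k' + 1 ≤ j ∧ n j = y} := by
        rintro y ⟨hyN, hxy⟩
        obtain ⟨j, hj⟩ := (by obtain ⟨k'', _, h2, _⟩ := hN hyN; exact h2.1 : y ∈ Set.range n)
        refine ⟨j, ?_, hj⟩
        have : n k' < n j := by rw [hj, ← hxn]; exact hxy
        have := hmono.lt_iff_lt.1 this
        omega
      obtain ⟨t', ht'seg, ht'F⟩ := haccx N' hN'sub hN'inf
      refine ⟨insert x t', ⟨?_, ?_⟩, ?_⟩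
      · rw [Finset.coe_insert]
        rintro y (rfl | hy)
        · exact hxN
        · exact (ht'seg.1 hy).1
      · intro b hbN c hc hbc
        rcases Finset.mem_insert.1 hc with hceq | hc
        · rw [hceq] at hbc
          have h1 : x ≤ b := Nat.sInf_le hbN
          have h2 : b = x := le_antisymm hbc h1
          rw [h2]; exact Finset.mem_insert_self _ _
        · by_cases hbx : b = x
          · rw [hbx]; exact Finset.mem_insert_self _ _
          · have hbN' : b ∈ N' := ⟨hbN, lt_of_le_of_ne (Nat.sInf_le hbN) (Ne.symm hbx)⟩
            exact Finset.mem_insert_of_mem (ht'seg.2 b hbN' c hc hbc)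
      · rw [Finset.union_insert, ← Finset.insert_union]
        exact ht'F
    set Inv2 : ℕ × Finset ℕ × ℕ → Prop := fun σ =>
      σ.2.1 ⊆ (Finset.range σ.2.2).image n ∧ ∀ a ⊆ σ.2.1, Rejects F a (T a) with hInv2
    set Rel2 : (ℕ × Finset ℕ × ℕ) → (ℕ × Finset ℕ × ℕ) → Prop := fun σ τ =>
      τ.2.1 = insert τ.1 σ.2.1 ∧ (∀ b ∈ σ.2.1, b < τ.1) ∧ τ.1 ∈ Set.range n with hRel2
    have hinit2 : Inv2 (0, ∅, 0) := by
      constructor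
      · intro b hb; exact absurd hb (Finset.notMem_empty b)
      · intro a ha
        rw [Finset.subset_empty.1 ha]
        exact hrej.mono (hTsub ∅)
    have hstep2 : ∀ σ, Inv2 σ → ∃ τ, Inv2 τ ∧ Rel2 σ τ := by
      rintro ⟨l, p, K⟩ ⟨h1, h2⟩
      dsimp only at h1 h2
      have hbigfin : (⋃ a ∈ p.powerset, Bad a).Finite :=
        Set.Finite.biUnion p.powerset.finite_toSet
          (fun a ha => hbadfin a (h2 a (Finset.mem_powerset.1 ha)))
      have hexists : ((Set.range n) \ (((⋃ a ∈ p.powerset, Bad a) ∪ (n '' Set.Iio K)) ∪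
          Set.Iic (p.sup id))).Infinite :=
        (Set.infinite_range_of_injective hmono.injective).diff
          ((hbigfin.union ((Set.finite_Iio K).image n)).union (Set.finite_Iic (p.sup id)))
      obtain ⟨x, hx⟩ := hexists.nonempty
      obtain ⟨k', rfl⟩ := hx.1
      have hk'K : K ≤ k' := by
        by_contra hc
        push_neg at hc
        exact hx.2 (Set.mem_union_left _ (Set.mem_union_right _ ⟨k', hc, rfl⟩))
      have hpx : ∀ b ∈ p, b < n k' := by
        intro b hb
        have hns : ¬ n k' ≤ p.sup id := fun hle => hx.2 (Set.mem_union_right _ hle)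
        exact lt_of_le_of_lt (Finset.le_sup (f := id) hb) (not_le.1 hns)
      have hinsP : insert (n k') p ⊆ (Finset.range (k' + 1)).image n := by
        intro b hb
        rcases Finset.mem_insert.1 hb with rfl | hb
        · exact Finset.mem_image.2 ⟨k', Finset.mem_range.2 (Nat.lt_succ_self _), rfl⟩
        · exact Finset.image_subset_image (Finset.range_subset_range.2 (by omega)) (h1 hb)
      refine ⟨(n k', insert (n k') p, k' + 1), ⟨hinsP, ?_⟩, rfl, hpx, ⟨k', rfl⟩⟩
      intro a ha
      by_cases hxa : n k' ∈ a
      · set a₀ := a.erase (n k') with ha₀def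
        have ha₀p : a₀ ⊆ p := by
          intro b hb
          obtain ⟨hne, hb'⟩ := Finset.mem_erase.1 hb
          exact (Finset.mem_insert.1 (ha hb')).resolve_left hne
        have haeq : a = insert (n k') a₀ := (Finset.insert_erase hxa).symm
        rcases hdec (k' + 1) a ((ha.trans hinsP)) with hca | hcr
        · exfalso
          have hbadmem : n k' ∈ Bad a₀ := by
            refine ⟨k', rfl, ⟨⟨k', rfl⟩, fun b hb => hpx b (ha₀p hb)⟩, ?_⟩
            rw [← haeq]
            exact hca
          exact hx.2 (Set.mem_union_left _ (Set.mem_union_left _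
            (Set.mem_biUnion (Finset.mem_coe.2 (Finset.mem_powerset.2 ha₀p)) hbadmem)))
        · apply hcr.mono
          rintro y ⟨⟨j, rfl⟩, hy2⟩
          have h3 : n k' < n j := hy2 _ hxa
          have := hmono.lt_iff_lt.1 h3
          exact ⟨j, by omega, rfl⟩
      · exact h2 a (fun b hb => (Finset.mem_insert.1 (ha hb)).resolve_left
          (fun h => hxa (h ▸ hb)))
    obtain ⟨g2, hg20, hgP2, hgR2⟩ := seq_of_step (0, ∅, 0) hinit2 hstep2
    set m : ℕ → ℕ := fun i => (g2 (i + 1)).1 with hm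
    have hm_mem : ∀ i, m i ∈ (g2 (i + 1)).2.1 := by
      intro i
      rw [(hgR2 i).1]
      exact Finset.mem_insert_self _ _
    have p2mono : ∀ i j, i ≤ j → (g2 i).2.1 ⊆ (g2 j).2.1 := by
      intro i j hij
      induction j with
      | zero => rw [Nat.le_zero.1 hij]
      | succ j ih =>
          rcases Nat.lt_or_ge i (j+1) with h | h
          · refine (ih (Nat.lt_succ_iff.1 h)).trans ?_
            rw [(hgR2 j).1]
            exact Finset.subset_insert _ _
          · rw [Nat.le_antisymm hij h]
    have hmm : StrictMono m := by
      apply strictMono_nat_of_lt_succ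
      intro i
      exact (hgR2 (i + 1)).2.1 (m i) (hm_mem i)
    have hmrange : ∀ i, m i ∈ Set.range n := fun i => (hgR2 i).2.2
    refine ⟨Set.range m, ?_, Set.infinite_range_of_injective hmm.injective, Or.inr ?_⟩
    · rintro x ⟨i, rfl⟩
      obtain ⟨j, hj⟩ := hmrange i
      rw [← hj]
      exact hnM j
    · intro s hs hsL
      have key : ∀ s : Finset ℕ, (↑s : Set ℕ) ⊆ Set.range m → ∃ i, s ⊆ (g2 i).2.1 := by
        intro s
        induction s using Finset.induction_on with
        | empty => exact fun _ => ⟨0, Finset.empty_subset _⟩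
        | @insert a s' hns ih =>
            intro hsub
            have hs'sub : (↑s' : Set ℕ) ⊆ Set.range m := by
              intro y hy
              apply hsub
              rw [Finset.coe_insert]
              exact Set.mem_insert_of_mem _ hy
            obtain ⟨i, hi⟩ := ih hs'sub
            have hamem : a ∈ Set.range m := by
              apply hsub
              rw [Finset.coe_insert]
              exact Set.mem_insert _ _
            obtain ⟨j, hj⟩ := hamem
            refine ⟨max i (j + 2), ?_⟩
            rw [Finset.insert_subset_iff]
            constructor
            · rw [← hj]
              exact p2mono (j + 1) (max i (j + 2))
                (le_trans (by omega) (le_max_right _ _)) (hm_mem j)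
            · exact hi.trans (p2mono _ _ (le_max_left _ _))
      obtain ⟨i, hi⟩ := key s hsL
      have hrejs : Rejects F s (T s) := (hgP2 i).2 s hi
      apply hrejs (T s) subset_rfl (hTinf s)
      intro N hN hNi
      refine ⟨∅, ⟨by simp, fun a ha b hb => absurd hb (Finset.notMem_empty b)⟩, ?_⟩
      rw [Finset.union_empty]
      exact hs

lemma isPlegmaPair_iff {s t : Finset ℕ} : IsPlegmaPair s t ↔
    s.Nonempty ∧ t.Nonempty ∧
    (∀ k, k < s.card → k < t.card → elt s k < elt t k) ∧
    (∀ k, k < s.card → k + 1 < t.card → elt s k < elt t (k + 1)) ∧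
    (∀ k, k < t.card → k + 1 < s.card → elt t k < elt s (k + 1)) := by
  constructor
  · rintro ⟨h1, h2, h3⟩
    exact ⟨h1 0, h1 1, fun k hk1 hk2 => h2 0 1 (by decide) k hk1 hk2,
      fun k hk1 hk2 => h3 0 1 k hk1 hk2, fun k hk1 hk2 => h3 1 0 k hk1 hk2⟩
  · rintro ⟨h1, h2, h3, h4, h5⟩
    refine ⟨?_, ?_, ?_⟩
    · intro i
      fin_cases i
      · exact h1
      · exact h2
    · intro i j hij k hk1 hk2
      fin_cases i <;> fin_cases j
      · exact absurd hij (by decide)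
      · exact h3 k hk1 hk2
      · exact absurd hij (by decide)
      · exact absurd hij (by decide)
    · intro i j k hk1 hk2
      fin_cases i <;> fin_cases j
      · exact elt_strictMono (Nat.lt_succ_self k) hk2
      · exact h4 k hk1 hk2
      · exact h5 k hk1 hk2
      · exact elt_strictMono (Nat.lt_succ_self k) hk2

lemma IsPlegmaPair.disjoint {s t : Finset ℕ} (h : IsPlegmaPair s t) : Disjoint s t := by
  obtain ⟨-, -, h3, h4, h5⟩ := isPlegmaPair_iff.1 h
  rw [Finset.disjoint_left]
  intro a has hat
  obtain ⟨i, hi, hia⟩ := exists_elt has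
  obtain ⟨j, hj, hja⟩ := exists_elt hat
  rcases le_or_gt i j with hij | hij
  · have h6 : elt s i < elt t i := h3 i hi (lt_of_le_of_lt hij hj)
    have h7 : elt t i ≤ elt t j := elt_mono hij hj
    omega
  · have h6 : elt t j < elt s (j + 1) := h5 j hj (by omega)
    have h7 : elt s (j + 1) ≤ elt s i := elt_mono (by omega) hi
    omega

lemma IsPlegmaPair.card_union {s t : Finset ℕ} (h : IsPlegmaPair s t) :
    (s ∪ t).card = s.card + t.card := Finset.card_union_of_disjoint h.disjoint

lemma plegma_union_elt {s t : Finset ℕ} (h : IsPlegmaPair s t) :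
    ∀ j, j < s.card + t.card → elt (s ∪ t) j =
      if j < 2 * min s.card t.card then (if j % 2 = 0 then elt s (j / 2) else elt t (j / 2))
      else (if s.card ≤ t.card then elt t (j - s.card) else elt s (j - t.card)) := by
  obtain ⟨-, -, h3, h4, h5⟩ := isPlegmaPair_iff.1 h
  set c := min s.card t.card with hc
  have hc1 : c ≤ s.card := Nat.min_le_left _ _
  have hc2 : c ≤ t.card := Nat.min_le_right _ _
  set M := s.card + t.card with hM
  set g : ℕ → ℕ := fun j =>
    if j < 2 * c then (if j % 2 = 0 then elt s (j / 2) else elt t (j / 2))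
    else (if s.card ≤ t.card then elt t (j - s.card) else elt s (j - t.card)) with hg
  have hmem : ∀ j, j < M → g j ∈ s ∪ t := by
    intro j hj
    rw [hg]
    dsimp only
    by_cases hA : j < 2 * c
    · rw [if_pos hA]
      by_cases hE : j % 2 = 0
      · rw [if_pos hE]
        exact Finset.mem_union_left _ (elt_mem (by omega))
      · rw [if_neg hE]
        exact Finset.mem_union_right _ (elt_mem (by omega))
    · rw [if_neg hA]
      by_cases hst : s.card ≤ t.card
      · have hcs : c = s.card := by rw [hc]; exact min_eq_left hst
        rw [if_pos hst]
        exact Finset.mem_union_right _ (elt_mem (by omega))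
      · have hct : c = t.card := by rw [hc]; exact min_eq_right (le_of_not_ge hst)
        rw [if_neg hst]
        exact Finset.mem_union_left _ (elt_mem (by omega))
  have hsucc : ∀ j, j + 1 < M → g j < g (j + 1) := by
    intro j hj1
    rw [hg]
    dsimp only
    by_cases hA : j + 1 < 2 * c
    · have hA' : j < 2 * c := by omega
      rw [if_pos hA, if_pos hA']
      by_cases hE : j % 2 = 0
      · rw [if_pos hE, if_neg (by omega : ¬ (j + 1) % 2 = 0)]
        rw [show (j + 1) / 2 = j / 2 by omega]
        exact h3 (j / 2) (by omega) (by omega)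
      · rw [if_neg hE, if_pos (by omega : (j + 1) % 2 = 0)]
        rw [show (j + 1) / 2 = j / 2 + 1 by omega]
        exact h5 (j / 2) (by omega) (by omega)
    · by_cases hB : j < 2 * c
      · have hj2c : j + 1 = 2 * c := by omega
        have hcpos : 1 ≤ c := by omega
        have hE : ¬ j % 2 = 0 := by omega
        rw [if_pos hB, if_neg hA, if_neg hE]
        rw [show j / 2 = c - 1 by omega]
        by_cases hst : s.card ≤ t.card
        · have hcs : c = s.card := by rw [hc]; exact min_eq_left hst
          rw [if_pos hst, show j + 1 - s.card = c by omega]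
          exact elt_strictMono (by omega) (by omega)
        · have hct : c = t.card := by rw [hc]; exact min_eq_right (le_of_not_ge hst)
          rw [if_neg hst, show j + 1 - t.card = c by omega]
          have := h5 (c - 1) (by omega) (by omega)
          rwa [show c - 1 + 1 = c by omega] at this
      · rw [if_neg hA, if_neg hB]
        by_cases hst : s.card ≤ t.card
        · have hcs : c = s.card := by rw [hc]; exact min_eq_left hst
          simp only [if_pos hst]
          have hjs : s.card ≤ j := by omega
          rw [show j + 1 - s.card = (j - s.card) + 1 by omega]
          refine elt_strictMono (Nat.lt_succ_self _) ?_
          omega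
        · have hct : c = t.card := by rw [hc]; exact min_eq_right (le_of_not_ge hst)
          simp only [if_neg hst]
          have hjt : t.card ≤ j := by omega
          rw [show j + 1 - t.card = (j - t.card) + 1 by omega]
          refine elt_strictMono (Nat.lt_succ_self _) ?_
          omega
  have hmono : ∀ i j, i < j → j < M → g i < g j := by
    have hd : ∀ d i, i + d + 1 < M → g i < g (i + d + 1) := by
      intro d
      induction d with
      | zero => intro i hi; exact hsucc i hi
      | succ d ih =>
          intro i hi
          have := ih i (by omega)
          have h2 := hsucc (i + d + 1) (by omega)
          calc g i < g (i + d + 1) := this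
            _ < g (i + d + 1 + 1) := h2
            _ = g (i + (d + 1) + 1) := by ring_nf
    intro i j hij hj
    obtain ⟨d, rfl⟩ : ∃ d, j = i + d + 1 := ⟨j - i - 1, by omega⟩
    exact hd d i hj
  intro j hj
  exact elt_eq_of_strictMono h.card_union hmem (fun a b hab hb => hmono a b hab hb) hj

lemma plegma_union_elt_left {s t : Finset ℕ} (h : IsPlegmaPair s t) {i : ℕ}
    (hi : i < min s.card t.card) : elt (s ∪ t) (2 * i) = elt s i := by
  have hc1 : min s.card t.card ≤ s.card := Nat.min_le_left _ _
  have hc2 : min s.card t.card ≤ t.card := Nat.min_le_right _ _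
  rw [plegma_union_elt h (2 * i) (by omega), if_pos (by omega), if_pos (by omega),
    show 2 * i / 2 = i by omega]

lemma plegma_union_elt_right {s t : Finset ℕ} (h : IsPlegmaPair s t) {i : ℕ}
    (hi : i < min s.card t.card) : elt (s ∪ t) (2 * i + 1) = elt t i := by
  have hc1 : min s.card t.card ≤ s.card := Nat.min_le_left _ _
  have hc2 : min s.card t.card ≤ t.card := Nat.min_le_right _ _
  rw [plegma_union_elt h (2 * i + 1) (by omega), if_pos (by omega), if_neg (by omega),
    show (2 * i + 1) / 2 = i by omega]

lemma plegma_union_elt_tail_right {s t : Finset ℕ} (h : IsPlegmaPair s t)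
    (hst : s.card ≤ t.card) {i : ℕ} (hi1 : s.card ≤ i) (hi2 : i < t.card) :
    elt (s ∪ t) (s.card + i) = elt t i := by
  have hcs : min s.card t.card = s.card := min_eq_left hst
  rw [plegma_union_elt h (s.card + i) (by omega), if_neg (by omega), if_pos hst,
    show s.card + i - s.card = i by omega]

lemma plegma_union_elt_tail_left {s t : Finset ℕ} (h : IsPlegmaPair s t)
    (hst : t.card < s.card) {i : ℕ} (hi1 : t.card ≤ i) (hi2 : i < s.card) :
    elt (s ∪ t) (t.card + i) = elt s i := by
  have hct : min s.card t.card = t.card := min_eq_right (le_of_lt hst)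
  rw [plegma_union_elt h (t.card + i) (by omega), if_neg (by omega),
    if_neg (by omega), show t.card + i - t.card = i by omega]

lemma plegma_union_initSeg_eq {F : Set (Finset ℕ)} (hF : Thin F)
    {s₁ s₂ t₁ t₂ : Finset ℕ} (hs₁ : s₁ ∈ F) (hs₂ : s₂ ∈ F) (ht₁ : t₁ ∈ F) (ht₂ : t₂ ∈ F)
    (hp : IsPlegmaPair s₁ s₂) (hq : IsPlegmaPair t₁ t₂)
    (hseg : InitSeg (s₁ ∪ s₂) (t₁ ∪ t₂)) : s₁ = t₁ ∧ s₂ = t₂ := by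
  obtain ⟨hcards0, helt0⟩ := elt_agree_of_initSeg hseg
  have hcards : s₁.card + s₂.card ≤ t₁.card + t₂.card := by
    rw [hp.card_union, hq.card_union] at hcards0; exact hcards0
  have helt' : ∀ j, j < s₁.card + s₂.card → elt (s₁ ∪ s₂) j = elt (t₁ ∪ t₂) j := by
    intro j hj
    exact helt0 j (by rw [hp.card_union]; exact hj)
  rcases le_or_gt (min s₁.card s₂.card) (min t₁.card t₂.card) with hcd | hcd
  · rcases le_or_gt s₂.card s₁.card with hm | hm
    · -- s₂ is the short side
      have hs2t2 : s₂ = t₂ := by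
        apply thin_eq hF hs₂ ht₂
        apply initSeg_of_elt_agree (by omega)
        intro i hi
        calc elt s₂ i = elt (s₁ ∪ s₂) (2 * i + 1) :=
              (plegma_union_elt_right hp (by omega)).symm
          _ = elt (t₁ ∪ t₂) (2 * i + 1) := helt' _ (by omega)
          _ = elt t₂ i := plegma_union_elt_right hq (by omega)
      have hn2 : s₂.card = t₂.card := congrArg Finset.card hs2t2
      have hs1t1 : s₁ = t₁ := by
        apply thin_eq hF hs₁ ht₁
        apply initSeg_of_elt_agree (by omega)
        intro i hi
        rcases lt_or_ge i (min s₁.card s₂.card) with hic | hic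
        · calc elt s₁ i = elt (s₁ ∪ s₂) (2 * i) :=
                (plegma_union_elt_left hp (by omega)).symm
            _ = elt (t₁ ∪ t₂) (2 * i) := helt' _ (by omega)
            _ = elt t₁ i := plegma_union_elt_left hq (by omega)
        · calc elt s₁ i = elt (s₁ ∪ s₂) (s₂.card + i) :=
                (plegma_union_elt_tail_left hp (by omega) (by omega) hi).symm
            _ = elt (t₁ ∪ t₂) (s₂.card + i) := helt' _ (by omega)
            _ = elt (t₁ ∪ t₂) (t₂.card + i) := by rw [hn2]
            _ = elt t₁ i := plegma_union_elt_tail_left hq (by omega) (by omega) (by omega)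
      exact ⟨hs1t1, hs2t2⟩
    · -- s₁ is the short side
      have hs1t1 : s₁ = t₁ := by
        apply thin_eq hF hs₁ ht₁
        apply initSeg_of_elt_agree (by omega)
        intro i hi
        calc elt s₁ i = elt (s₁ ∪ s₂) (2 * i) :=
              (plegma_union_elt_left hp (by omega)).symm
          _ = elt (t₁ ∪ t₂) (2 * i) := helt' _ (by omega)
          _ = elt t₁ i := plegma_union_elt_left hq (by omega)
      have hn1 : s₁.card = t₁.card := congrArg Finset.card hs1t1
      have hs2t2 : s₂ = t₂ := by
        apply thin_eq hF hs₂ ht₂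
        apply initSeg_of_elt_agree (by omega)
        intro i hi
        rcases lt_or_ge i (min s₁.card s₂.card) with hic | hic
        · calc elt s₂ i = elt (s₁ ∪ s₂) (2 * i + 1) :=
                (plegma_union_elt_right hp (by omega)).symm
            _ = elt (t₁ ∪ t₂) (2 * i + 1) := helt' _ (by omega)
            _ = elt t₂ i := plegma_union_elt_right hq (by omega)
        · calc elt s₂ i = elt (s₁ ∪ s₂) (s₁.card + i) :=
                (plegma_union_elt_tail_right hp (by omega) (by omega) hi).symm
            _ = elt (t₁ ∪ t₂) (s₁.card + i) := helt' _ (by omega)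
            _ = elt (t₁ ∪ t₂) (t₁.card + i) := by rw [hn1]
            _ = elt t₂ i := plegma_union_elt_tail_right hq (by omega) (by omega) (by omega)
      exact ⟨hs1t1, hs2t2⟩
  · exfalso
    rcases le_or_gt t₂.card t₁.card with hn | hn
    · apply hF s₂ hs₂ t₂ ht₂
      refine ⟨initSeg_of_elt_agree (by omega) ?_, ?_⟩
      · intro i hi
        calc elt t₂ i = elt (t₁ ∪ t₂) (2 * i + 1) :=
              (plegma_union_elt_right hq (by omega)).symm
          _ = elt (s₁ ∪ s₂) (2 * i + 1) := (helt' _ (by omega)).symm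
          _ = elt s₂ i := plegma_union_elt_right hp (by omega)
      · intro heq
        have := congrArg Finset.card heq
        omega
    · apply hF s₁ hs₁ t₁ ht₁
      refine ⟨initSeg_of_elt_agree (by omega) ?_, ?_⟩
      · intro i hi
        calc elt t₁ i = elt (t₁ ∪ t₂) (2 * i) :=
              (plegma_union_elt_left hq (by omega)).symm
          _ = elt (s₁ ∪ s₂) (2 * i) := (helt' _ (by omega)).symm
          _ = elt s₁ i := plegma_union_elt_left hp (by omega)
      · intro heq
        have := congrArg Finset.card heq
        omega

-- ### trajectories for the plegma walk

def traj (q : ℕ → ℕ) : ℕ → ℕ → ℕ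
  | 0 => q
  | (i+1) => fun k => min (traj q i k + 2) (traj q i (k+1) - 1)

variable {q : ℕ → ℕ}

lemma traj_zero (k : ℕ) : traj q 0 k = q k := rfl

lemma traj_succ (i k : ℕ) : traj q (i+1) k = min (traj q i k + 2) (traj q i (k+1) - 1) := rfl

lemma traj_spacing (hq2 : ∀ k, q k + 2 ≤ q (k+1)) : ∀ i k, traj q i k + 2 ≤ traj q i (k+1) := by
  intro i
  induction i with
  | zero => exact hq2
  | succ i ih =>
      intro k
      have h1 := ih k
      have h2 := ih (k+1)
      rw [traj_succ, traj_succ]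
      omega

lemma traj_lt_succ (hq2 : ∀ k, q k + 2 ≤ q (k+1)) (i k : ℕ) :
    traj q i k < traj q (i+1) k ∧ traj q (i+1) k ≤ traj q i k + 2 := by
  have h1 := traj_spacing hq2 i k
  rw [traj_succ]
  omega

lemma traj_succ_lt (hq2 : ∀ k, q k + 2 ≤ q (k+1)) (i k : ℕ) :
    traj q (i+1) k < traj q i (k+1) := by
  have h1 := traj_spacing hq2 i k
  rw [traj_succ]
  omega

lemma traj_strictMono_k (hq2 : ∀ k, q k + 2 ≤ q (k+1)) (i : ℕ) : StrictMono (traj q i) := by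
  apply strictMono_nat_of_lt_succ
  intro k
  have := traj_spacing hq2 i k
  omega

lemma traj_tail {m : ℕ} (htail : ∀ k, m - 1 ≤ k → q (k+1) = q k + 2) :
    ∀ i k, m - 1 ≤ k → traj q i k = q k + i := by
  intro i
  induction i with
  | zero => intro k _; rfl
  | succ i ih =>
      intro k hk
      have h1 := ih k hk
      have h2 := ih (k+1) (by omega)
      have h3 := htail k hk
      rw [traj_succ]
      omega

lemma q_tail_formula {m : ℕ} (htail : ∀ k, m - 1 ≤ k → q (k+1) = q k + 2) :
    ∀ d, q (m - 1 + d) = q (m-1) + 2 * d := by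
  intro d
  induction d with
  | zero => simp
  | succ d ih =>
      have := htail (m - 1 + d) (by omega)
      have he : m - 1 + (d + 1) = (m - 1 + d) + 1 := by omega
      rw [he, this, ih]
      omega

lemma traj_eventually (q : ℕ → ℕ) (m : ℕ) (hq2 : ∀ k, q k + 2 ≤ q (k+1))
    (htail : ∀ k, m - 1 ≤ k → q (k+1) = q k + 2) :
    ∃ I, ∀ i, I ≤ i → ∀ k, traj q i k + 2 * (m - 1) = q (m - 1) + i + 2 * k := by
  -- by downward induction from the tail
  have main : ∀ j, ∃ I, ∀ i, I ≤ i → ∀ k, (m - 1) - j ≤ k →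
      traj q i k + 2 * (m - 1) = q (m - 1) + i + 2 * k := by
    intro j
    induction j with
    | zero =>
        refine ⟨0, fun i _ k hk => ?_⟩
        rw [traj_tail htail i k (by omega)]
        have := q_tail_formula htail (k - (m - 1))
        rw [show m - 1 + (k - (m-1)) = k by omega] at this
        omega
    | succ j ihj =>
        obtain ⟨I, hI⟩ := ihj
        by_cases hjm : m - 1 ≤ j
        · exact ⟨I, fun i hi k hk => hI i hi k (by omega)⟩
        · set k₀ := m - 1 - (j + 1) with hk₀
          -- IH gives the claim for all k ≥ k₀ + 1 ; prove it for k₀ eventually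
          have hIH : ∀ i, I ≤ i → traj q i (k₀ + 1) + 2 * (m-1) = q (m-1) + i + 2 * (k₀ + 1) :=
            fun i hi => hI i hi (k₀ + 1) (by omega)
          have hup : ∀ i, I ≤ i → traj q i k₀ + 2 * (m - 1) ≤ q (m-1) + i + 2 * k₀ := by
            intro i hi
            have := hIH i hi
            have := traj_spacing hq2 i k₀
            omega
          have hstep : ∀ i, I ≤ i →
              traj q i k₀ + 2 * (m-1) = q (m-1) + i + 2 * k₀ →
              traj q (i+1) k₀ + 2 * (m-1) = q (m-1) + (i+1) + 2 * k₀ := by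
            intro i hi hP
            have h1 := hIH i hi
            have h2 := traj_succ (q := q) i k₀
            have h3 := traj_spacing hq2 i k₀
            omega
          have hprog : ∀ i, I ≤ i →
              traj q i k₀ + 2 * (m-1) ≠ q (m-1) + i + 2 * k₀ →
              (q (m-1) + (i+1) + 2 * k₀) - (traj q (i+1) k₀ + 2 * (m-1)) <
                (q (m-1) + i + 2 * k₀) - (traj q i k₀ + 2 * (m-1)) := by
            intro i hi hne
            have h1 := hIH i hi
            have h2 := traj_succ (q := q) i k₀
            have h3 := traj_spacing hq2 i k₀
            have h4 := hup i hi
            omega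
          have hzero : ∀ t i, I ≤ i →
              q (m-1) + i + 2 * k₀ ≤ traj q i k₀ + 2 * (m-1) + t →
              traj q (i + t) k₀ + 2 * (m-1) = q (m-1) + (i + t) + 2 * k₀ := by
            intro t
            induction t with
            | zero =>
                intro i hi hb
                rw [Nat.add_zero]
                have := hup i hi
                omega
            | succ t iht =>
                intro i hi hb
                by_cases hP : traj q i k₀ + 2 * (m-1) = q (m-1) + i + 2 * k₀
                · have h1 := hstep i hi hP
                  have h2 := iht (i+1) (by omega) (by omega)
                  rw [show i + (t+1) = (i+1) + t by omega]
                  exact h2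
                · have h1 := hprog i hi hP
                  have h2 := hup (i+1) (by omega)
                  have h3 := iht (i+1) (by omega) (by omega)
                  rw [show i + (t+1) = (i+1) + t by omega]
                  exact h3
          refine ⟨I + ((q (m-1) + I + 2 * k₀) - (traj q I k₀ + 2 * (m-1))), ?_⟩
          intro i hi k hk
          rcases Nat.lt_or_ge k (k₀ + 1) with hkc | hkc
          · have hkk : k = k₀ := by omega
            subst hkk
            have hup0 := hup I le_rfl
            have := hzero (i - I) I le_rfl (by omega)
            rwa [show I + (i - I) = i by omega] at this
          · exact hI i (by omega) k (by omega)
  obtain ⟨I, hI⟩ := main (m - 1)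
  exact ⟨I, fun i hi k => hI i hi k (by omega)⟩

-- ### the plegma walk

lemma walk_const {F : Set (Finset ℕ)} (hF : Thin F) {X : Type*} (φ : Finset ℕ → X)
    {L : Set ℕ} (hL : L.Infinite)
    (hVL : ∀ P : Set ℕ, P ⊆ L → P.Infinite → ∃ u, u ∈ F ∧ InitSegOfInf u P)
    (hEQ : ∀ s₁, s₁ ∈ F → (↑s₁ : Set ℕ) ⊆ L → ∀ s₂, s₂ ∈ F → (↑s₂ : Set ℕ) ⊆ L →
      IsPlegmaPair s₁ s₂ → φ s₁ = φ s₂)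
    (hne : (∅ : Finset ℕ) ∉ F) {s : Finset ℕ} (hs : s ∈ F)
    (hsL1 : ∀ b ∈ s, ∃ j, b = Nat.nth (· ∈ L) (2 * j + 1)) :
    ∃ C₀, ∀ C, C₀ ≤ C → ∀ u', u' ∈ F →
      InitSegOfInf u' (Set.range (fun k => Nat.nth (· ∈ L) (C + 2 * k))) → φ s = φ u' := by
  set nthL : ℕ → ℕ := Nat.nth (· ∈ L) with hnthL
  have hmono : StrictMono nthL := Nat.nth_strictMono hL
  have hmem : ∀ k, nthL k ∈ L := fun k => Nat.nth_mem_of_infinite hL k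
  have hsne : s.Nonempty := Finset.nonempty_iff_ne_empty.2 (fun h => hne (h ▸ hs))
  set m := s.card with hm
  have hm1 : 1 ≤ m := Finset.card_pos.2 hsne
  have hsel : ∀ k, ∃ p, k < m → elt s k = nthL (2 * p + 1) := by
    intro k
    by_cases h : k < m
    · obtain ⟨j, hj⟩ := hsL1 (elt s k) (elt_mem h)
      exact ⟨j, fun _ => hj⟩
    · exact ⟨0, fun h' => absurd h' h⟩
  choose jf hjf using hsel
  set Q : ℕ → ℕ := fun k =>
    if k < m then 2 * jf k + 1 else (2 * jf (m - 1) + 1) + 2 * (k - (m - 1)) with hQ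
  have hQs : ∀ k, k < m → nthL (Q k) = elt s k := by
    intro k hk
    rw [hQ]
    dsimp only
    rw [if_pos hk]
    exact (hjf k hk).symm
  have hjfmono : ∀ k, k + 1 < m → jf k < jf (k + 1) := by
    intro k hk
    have h1 : elt s k < elt s (k + 1) := elt_strictMono (Nat.lt_succ_self k) hk
    rw [hjf k (by omega), hjf (k+1) hk] at h1
    have := hmono.lt_iff_lt.1 h1
    omega
  have hQ2 : ∀ k, Q k + 2 ≤ Q (k + 1) := by
    intro k
    rw [hQ]
    dsimp only
    by_cases h1 : k + 1 < m
    · rw [if_pos (by omega), if_pos h1]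
      have := hjfmono k h1
      omega
    · by_cases h2 : k < m
      · have hk : k = m - 1 := by omega
        rw [if_pos h2, if_neg h1, hk]
        omega
      · rw [if_neg h2, if_neg h1]
        omega
  have hQtail : ∀ k, m - 1 ≤ k → Q (k + 1) = Q k + 2 := by
    intro k hk
    rw [hQ]
    dsimp only
    by_cases h2 : k < m
    · have hk' : k = m - 1 := by omega
      rw [if_neg (by omega), if_pos h2, hk']
      omega
    · rw [if_neg (by omega), if_neg h2]
      omega
  have hQmonoS : StrictMono Q := strictMono_nat_of_lt_succ (fun k => by have := hQ2 k; omega)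
  set e : ℕ → ℕ → ℕ := fun i k => nthL (traj Q i k) with he
  have heS : ∀ i, StrictMono (e i) := fun i => hmono.comp (traj_strictMono_k hQ2 i)
  set P : ℕ → Set ℕ := fun i => Set.range (e i) with hP
  have hPL : ∀ i, P i ⊆ L := by
    rintro i x ⟨k, rfl⟩
    exact hmem _
  have hPinf : ∀ i, (P i).Infinite := fun i => Set.infinite_range_of_injective (heS i).injective
  have hex : ∀ i, ∃ u, u ∈ F ∧ InitSegOfInf u (P i) := fun i => hVL (P i) (hPL i) (hPinf i)
  choose u hu1 hu2 using hex
  have huelt : ∀ i k, k < (u i).card → elt (u i) k = e i k := fun i k hk =>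
    elt_initSegOfInf_range (heS i) (hu2 i) hk
  have huL : ∀ i, (↑(u i) : Set ℕ) ⊆ L := fun i => (hu2 i).1.trans (hPL i)
  have hune : ∀ i, (u i).Nonempty :=
    fun i => Finset.nonempty_iff_ne_empty.2 (fun h => hne (h ▸ hu1 i))
  have hpair : ∀ i, IsPlegmaPair (u i) (u (i + 1)) := by
    intro i
    rw [isPlegmaPair_iff]
    refine ⟨hune i, hune (i + 1), ?_, ?_, ?_⟩
    · intro k hk1 hk2
      rw [huelt i k hk1, huelt (i+1) k hk2]
      exact hmono ((traj_lt_succ hQ2 i k).1)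
    · intro k hk1 hk2
      rw [huelt i k hk1, huelt (i+1) (k+1) hk2]
      apply hmono
      have h1 := traj_spacing hQ2 i k
      have h2 := (traj_lt_succ hQ2 i (k+1)).1
      omega
    · intro k hk1 hk2
      rw [huelt (i+1) k hk1, huelt i (k+1) hk2]
      exact hmono (traj_succ_lt hQ2 i k)
  have hchain : ∀ i, φ (u 0) = φ (u i) := by
    intro i
    induction i with
    | zero => rfl
    | succ i ih =>
        exact ih.trans
          (hEQ (u i) (hu1 i) (huL i) (u (i+1)) (hu1 (i+1)) (huL (i+1)) (hpair i))
  have hsP0 : InitSegOfInf s (P 0) := by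
    constructor
    · intro b hb
      obtain ⟨k, hk, rfl⟩ := exists_elt (Finset.mem_coe.1 hb)
      exact ⟨k, hQs k hk⟩
    · intro a ha b hb hab
      obtain ⟨k, rfl⟩ := ha
      by_cases hk : k < m
      · have h0 : e 0 k = elt s k := hQs k hk
        rw [h0]
        exact Finset.mem_coe.2 (elt_mem hk)
      · exfalso
        obtain ⟨k', hk', rfl⟩ := exists_elt (Finset.mem_coe.1 hb)
        have h1 : Q (m-1) < Q k := hQmonoS (by omega)
        have h2 : elt s k' ≤ elt s (m-1) := elt_mono (by omega) (by omega)
        have h3 : nthL (Q (m-1)) = elt s (m-1) := hQs (m-1) (by omega)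
        have h4 : nthL (Q (m-1)) < nthL (Q k) := hmono h1
        have h5 : e 0 k = nthL (Q k) := rfl
        rw [h5] at hab
        omega
  have hu0 : u 0 = s := initSegOfInf_unique hF (hu1 0) hs (hu2 0) hsP0
  obtain ⟨I, hI⟩ := traj_eventually Q m hQ2 hQtail
  refine ⟨Q (m-1) + I, ?_⟩
  intro C hC u' hu'F hu'seg
  set i := C + 2 * (m-1) - Q (m-1) with hidef
  have hiI : I ≤ i := by omega
  have htr : ∀ k, traj Q i k = C + 2 * k := by
    intro k
    have := hI i hiI k
    omega
  have hfeq : (fun k => nthL (traj Q i k)) = (fun k => nthL (C + 2 * k)) := by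
    funext k
    rw [htr k]
  have hPeq : P i = Set.range (fun k => nthL (C + 2 * k)) := by
    show Set.range (fun k => nthL (traj Q i k)) = _
    rw [hfeq]
  have huu' : u i = u' := by
    apply initSegOfInf_unique hF (hu1 i) hu'F (hu2 i)
    rw [hPeq]
    exact hu'seg
  rw [← hu0, hchain i, huu']


end HOSM


open HOSM

/-- If `F` is regular thin and `φ : F → X` is hereditarily nonconstant,
then for every infinite `N` there is an infinite `L ⊆ N` such that `φ s₁ ≠ φ s₂` for every
plegma pair `(s₁, s₂)` in `F↾L`. -/
theorem hereditarily_nonconstant_plegma_injective {X : Type*}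
    (F : Set (Finset ℕ)) (hF : RegularThin F) (φ : Finset ℕ → X)
    (hφ : ∀ L : Set ℕ, L.Infinite →
      ∃ s ∈ restrict F L, ∃ t ∈ restrict F L, φ s ≠ φ t)
    (N : Set ℕ) (hN : N.Infinite) :
    ∃ L : Set ℕ, L ⊆ N ∧ L.Infinite ∧
      ∀ s₁ ∈ restrict F L, ∀ s₂ ∈ restrict F L, IsPlegmaPair s₁ s₂ → φ s₁ ≠ φ s₂ := by
  classical
  have hthin : Thin F := hF.1
  have hFne : (∅ : Finset ℕ) ∉ F := by
    intro hemp
    obtain ⟨s, hs, t, ht, hst⟩ := hφ Set.univ Set.infinite_univ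
    have hne : s ≠ t := fun h => hst (by rw [h])
    have hseg : ∀ w : Finset ℕ, InitSeg ∅ w :=
      fun w => ⟨Finset.empty_subset w, fun a _ b hb _ => absurd hb (Finset.notMem_empty b)⟩
    rcases eq_or_ne s ∅ with rfl | hs0
    · exact hthin t ht.1 ∅ hemp ⟨hseg t, hne⟩
    · exact hthin s hs.1 ∅ hemp ⟨hseg s, Ne.symm hs0⟩
  obtain ⟨L₀, hL₀N, hL₀i, halt⟩ := galvin F hN
  rcases halt with hVL₀ | hempty
  swap
  · refine ⟨L₀, hL₀N, hL₀i, ?_⟩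
    intro s₁ hs₁ s₂ hs₂ hp
    exact absurd hs₁.2 (hempty s₁ hs₁.1)
  · set F₁ : Set (Finset ℕ) :=
      {w | ∃ a b : Finset ℕ, a ∈ F ∧ b ∈ F ∧ IsPlegmaPair a b ∧ φ a = φ b ∧ w = a ∪ b} with hF₁
    obtain ⟨L, hLL₀, hLi, halt1⟩ := galvin F₁ hL₀i
    rcases halt1 with hGA | hnopair
    swap
    · refine ⟨L, hLL₀.trans hL₀N, hLi, ?_⟩
      rintro s₁ ⟨hs₁F, hs₁L⟩ s₂ ⟨hs₂F, hs₂L⟩ hp heq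
      apply hnopair (s₁ ∪ s₂) ⟨s₁, s₂, hs₁F, hs₂F, hp, heq, rfl⟩
      rw [Finset.coe_union]
      exact Set.union_subset hs₁L hs₂L
    · exfalso
      have hVL : ∀ P : Set ℕ, P ⊆ L → P.Infinite → ∃ u, u ∈ F ∧ InitSegOfInf u P := by
        intro P hP hPi
        obtain ⟨t, h1, h2⟩ := hVL₀ P (hP.trans hLL₀) hPi
        exact ⟨t, h2, h1⟩
      have hEQ : ∀ s₁, s₁ ∈ F → (↑s₁ : Set ℕ) ⊆ L → ∀ s₂, s₂ ∈ F → (↑s₂ : Set ℕ) ⊆ L →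
          IsPlegmaPair s₁ s₂ → φ s₁ = φ s₂ := by
        intro s₁ hs₁F hs₁L s₂ hs₂F hs₂L hp
        set v := s₁ ∪ s₂ with hv
        set Tv : Set ℕ := {x | x ∈ L ∧ ∀ b ∈ v, b < x} with hTv
        set Nv : Set ℕ := ↑v ∪ Tv with hNv
        have hNvL : Nv ⊆ L := by
          rintro x (hx | hx)
          · rw [hv, Finset.coe_union] at hx
            rcases hx with hx | hx
            · exact hs₁L hx
            · exact hs₂L hx
          · exact hx.1
        have hTvinf : Tv.Infinite := by
          apply (hLi.diff (Set.finite_Iic (v.sup id))).mono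
          rintro x ⟨hx1, hx2⟩
          simp only [Set.mem_Iic, not_le] at hx2
          exact ⟨hx1, fun b hb => lt_of_le_of_lt (Finset.le_sup (f := id) hb) hx2⟩
        have hNvinf : Nv.Infinite := hTvinf.mono Set.subset_union_right
        have hseg_v : InitSegOfInf v Nv :=
          initSegOfInf_union_tail (fun x hx b hb => hx.2 b hb)
        obtain ⟨w, hwseg, hwF₁⟩ := hGA Nv hNvL hNvinf
        obtain ⟨t₁, t₂, ht₁F, ht₂F, hq, hphi, rfl⟩ := hwF₁
        rcases initSeg_comparable hseg_v hwseg with hcomp | hcomp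
        · obtain ⟨e1, e2⟩ :=
            plegma_union_initSeg_eq hthin hs₁F hs₂F ht₁F ht₂F hp hq hcomp
          rw [e1, e2]
          exact hphi
        · obtain ⟨e1, e2⟩ :=
            plegma_union_initSeg_eq hthin ht₁F ht₂F hs₁F hs₂F hq hp hcomp
          rw [← e1, ← e2]
          exact hphi
      set L1 : Set ℕ := Set.range (fun j => Nat.nth (· ∈ L) (2 * j + 1)) with hL1
      have hmonoL : StrictMono (Nat.nth (· ∈ L)) := Nat.nth_strictMono hLi
      have hL1L : L1 ⊆ L := by
        rintro x ⟨j, rfl⟩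
        exact Nat.nth_mem_of_infinite hLi _
      have hL1i : L1.Infinite := by
        apply Set.infinite_range_of_injective
        intro a b hab
        have := hmonoL.injective hab
        omega
      obtain ⟨s, hsr, t, htr, hst⟩ := hφ L1 hL1i
      obtain ⟨Cs, hCs⟩ := walk_const hthin φ hLi hVL hEQ hFne hsr.1 (fun b hb => by
        obtain ⟨j, hj⟩ := hsr.2 (Finset.mem_coe.2 hb)
        exact ⟨j, hj.symm⟩)
      obtain ⟨Ct, hCt⟩ := walk_const hthin φ hLi hVL hEQ hFne htr.1 (fun b hb => by
        obtain ⟨j, hj⟩ := htr.2 (Finset.mem_coe.2 hb)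
        exact ⟨j, hj.symm⟩)
      set C := max Cs Ct with hC
      have hrsub : Set.range (fun k => Nat.nth (· ∈ L) (C + 2 * k)) ⊆ L := by
        rintro x ⟨k, rfl⟩
        exact Nat.nth_mem_of_infinite hLi _
      have hrinf : (Set.range (fun k => Nat.nth (· ∈ L) (C + 2 * k))).Infinite := by
        apply Set.infinite_range_of_injective
        intro a b hab
        have := hmonoL.injective hab
        omega
      obtain ⟨u, huF, huseg⟩ := hVL _ hrsub hrinf
      have h1 := hCs C (le_max_left _ _) u huF huseg
      have h2 := hCt C (le_max_right _ _) u huF huseg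
      exact hst (h1.trans h2.symm)
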